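/- arXiv:2206.15278 — 7 statements merged into one kernel-verified Lean document; each statement's English description precedes it below -/
import Mathlib

section
/- Let K be a number field and 𝔄 a nonzero principal ideal of O_K with n(𝔄) > ρ_∞(K). Then 𝔄 is strictly large, i.e., 𝔄 has a generator x ∈ O_K with |σ(x)| > 1 for every embedding σ : K → ℂ. -/
open NumberField

/-- The logarithmic embedding of a unit: the coordinate at an infinite place `w`
is `mult w * log (w x)` (i.e. `log|σ(x)|` at real places, `2 log|σ(x)|` at complex places). -/
noncomputable def logEmb (K : Type) [Field K] [NumberField K] (u : (𝓞 K)ˣ) :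
    NumberField.InfinitePlace K → ℝ :=
  fun w => (w.mult : ℝ) * Real.log (w ((u : 𝓞 K) : K))

/-- The covering radius `ρ_∞(K)` of the lattice of units with respect to the sup norm:
the sup over vectors `v` in the hyperplane `∑ coordinates = 0` of the distance (in the
`L∞` norm) from `v` to the lattice `Λ_K = ℓ(𝓞_K^×)`. -/
noncomputable def rhoInf (K : Type) [Field K] [NumberField K] : ℝ :=
  ⨆ v : {v : NumberField.InfinitePlace K → ℝ // ∑ w, v w = 0},
    ⨅ u : (𝓞 K)ˣ, ‖(v : NumberField.InfinitePlace K → ℝ) - logEmb K u‖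

/-!
Write `𝔄 = (y)` and `n = n(𝔄)`. The vector `v = (mult w * (log w(y) - n))_w` lies in the
hyperplane `H`, because `∑_w mult w * log w(y) = log N(𝔄) = d n`. Since `Λ_K` is a full lattice
in `H`, `ρ_∞(K)` is finite, and as `n > ρ_∞(K)` some unit `u` has `‖v - ℓ(u)‖_∞ < n`. For the
generator `x = y u⁻¹` this reads `|mult w * (log w(x) - n)| < n` at every place `w`, and as
`mult w ≥ 1` this forces `log w(x) > 0`, i.e. `|σ(x)| > 1` for every embedding `σ`.
-/

open NumberField.InfinitePlace NumberField.Units NumberField.Units.dirichletUnitTheorem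

theorem ZLattice.exists_norm_sub_le {E : Type*} [NormedAddCommGroup E] [NormedSpace ℝ E]
    [FiniteDimensional ℝ E] (L : Submodule ℤ E) [DiscreteTopology L] [IsZLattice ℝ L] :
    ∃ C, 0 ≤ C ∧ ∀ x : E, ∃ l ∈ L, ‖x - l‖ ≤ C := by
  let b := (Module.Free.chooseBasis ℤ L).ofZLatticeBasis ℝ L
  refine ⟨∑ i, ‖b i‖, by positivity, fun x => ⟨ZSpan.floor b x, ?_, ZSpan.norm_fract_le b x⟩⟩
  simpa only [b, Module.Basis.ofZLatticeBasis_span] using (ZSpan.floor b x).2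

theorem Pi.norm_le_card_mul_of_sum_eq_zero {ι : Type*} [Fintype ι] {f : ι → ℝ}
    (hf : ∑ i, f i = 0) (i₀ : ι) {c : ℝ} (hc₀ : 0 ≤ c) (hc : ∀ i ≠ i₀, |f i| ≤ c) :
    ‖f‖ ≤ Fintype.card ι * c := by
  classical
  have hcard : c ≤ Fintype.card ι * c :=
    le_mul_of_one_le_left hc₀ (by exact_mod_cast Fintype.card_pos_iff.mpr ⟨i₀⟩)
  refine (pi_norm_le_iff_of_nonneg (hc₀.trans hcard)).mpr fun i => ?_
  rw [Real.norm_eq_abs]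
  by_cases hi : i = i₀
  · subst hi
    have hfi : f i = -∑ j ∈ Finset.univ.erase i, f j := by
      rw [← Finset.add_sum_erase _ f (Finset.mem_univ i)] at hf
      linarith
    calc |f i| ≤ ∑ j ∈ Finset.univ.erase i, |f j| := by
          rw [hfi, abs_neg]; exact Finset.abs_sum_le_sum_abs _ _
      _ ≤ ∑ _j ∈ Finset.univ.erase i, c :=
          Finset.sum_le_sum fun j hj => hc j (Finset.ne_of_mem_erase hj)
      _ ≤ Fintype.card ι * c := by
          rw [Finset.sum_const, nsmul_eq_mul]
          gcongr
          exact_mod_cast (Finset.card_erase_le).trans (Finset.card_univ).le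
  · exact (hc i hi).trans hcard

theorem Real.one_lt_of_abs_mul_log_sub_lt {m t n : ℝ} (hm : 1 ≤ m) (ht : 0 ≤ t)
    (h : |m * (Real.log t - n)| < n) : 1 < t := by
  rw [← Real.log_pos_iff ht]
  rw [abs_mul, abs_of_nonneg (zero_le_one.trans hm)] at h
  have := abs_lt.mp ((le_mul_of_one_le_left (abs_nonneg _) hm).trans_lt h)
  linarith [this.1]

section

variable {K : Type} [Field K] [NumberField K]

theorem sum_logEmb (u : (𝓞 K)ˣ) : ∑ w, logEmb K u w = 0 :=
  sum_mult_mul_log u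

open scoped Classical in
variable (K) in
theorem exists_unit_norm_sub_logEmb_le :
    ∃ C, ∀ v : InfinitePlace K → ℝ, ∑ w, v w = 0 → ∃ u : (𝓞 K)ˣ, ‖v - logEmb K u‖ ≤ C := by
  -- Mathlib's unit lattice only records the coordinates `w ≠ w₀`; the vanishing sum controls
  -- the remaining one.
  obtain ⟨C, hC₀, hC⟩ := ZLattice.exists_norm_sub_le (E := logSpace K) (unitLattice K)
  refine ⟨Fintype.card (InfinitePlace K) * C, fun v hv => ?_⟩
  obtain ⟨_, ⟨u, -, rfl⟩, hu⟩ := hC fun w => v w.1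
  refine ⟨Additive.toMul u, Pi.norm_le_card_mul_of_sum_eq_zero ?_ w₀ hC₀ fun w hw => ?_⟩
  · simp only [Pi.sub_apply, Finset.sum_sub_distrib, hv, sum_logEmb, sub_zero]
  · exact (norm_le_pi_norm _ ⟨w, hw⟩).trans hu

theorem exists_unit_norm_sub_logEmb_lt {v : InfinitePlace K → ℝ} (hv : ∑ w, v w = 0)
    {r : ℝ} (hr : rhoInf K < r) : ∃ u : (𝓞 K)ˣ, ‖v - logEmb K u‖ < r := by
  -- `⨆` of an unbounded family is junk, so `rhoInf K` needs this bound to be a true supremum.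
  obtain ⟨C, hC⟩ := exists_unit_norm_sub_logEmb_le K
  have hbdd : BddAbove (Set.range fun v : {v : InfinitePlace K → ℝ // ∑ w, v w = 0} =>
      ⨅ u : (𝓞 K)ˣ, ‖(v : InfinitePlace K → ℝ) - logEmb K u‖) := by
    refine ⟨C, ?_⟩
    rintro _ ⟨v, rfl⟩
    obtain ⟨u, hu⟩ := hC v v.2
    exact (ciInf_le ⟨0, by rintro _ ⟨u, rfl⟩; exact norm_nonneg _⟩ u).trans hu
  exact exists_lt_of_ciInf_lt ((le_ciSup hbdd ⟨v, hv⟩).trans_lt hr)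

theorem sum_mult_mul_log_eq_log_absNorm (y : 𝓞 K) :
    ∑ w : InfinitePlace K, w.mult * Real.log (w (y : K)) =
      Real.log (Ideal.absNorm (Ideal.span {y}) : ℝ) := by
  by_cases hy : y = 0
  · simp [hy]
  have hy' : (y : K) ≠ 0 := RingOfIntegers.coe_ne_zero_iff.mpr hy
  rw [Ideal.absNorm_span_singleton, Nat.cast_natAbs, Int.cast_abs, ← Rat.cast_intCast,
    Algebra.coe_norm_int, ← Rat.cast_abs, ← prod_eq_abs_norm,
    Real.log_prod fun w _ => pow_ne_zero _ (pos_iff.mpr hy').ne']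
  simp only [Real.log_pow]

theorem mult_mul_log_mul_unit_inv (w : InfinitePlace K) {y : 𝓞 K} (hy : y ≠ 0) (u : (𝓞 K)ˣ) :
    w.mult * Real.log (w ((y * ↑(u⁻¹) : 𝓞 K) : K)) = w.mult * Real.log (w y) - logEmb K u w := by
  have hy' : w (y : K) ≠ 0 := (pos_iff.mpr (RingOfIntegers.coe_ne_zero_iff.mpr hy)).ne'
  simp only [map_mul, map_units_inv, map_inv₀]
  rw [Real.log_mul hy' (inv_ne_zero (pos_at_place u w).ne'), Real.log_inv, logEmb]
  ring

end

/-- Every nonzero principal ideal `𝔄` of `𝓞 K` with logarithmic norm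
`n(𝔄) = log N(𝔄) / [K:ℚ]` greater than the covering radius `ρ_∞(K)` is strictly large:
it has a generator all of whose Archimedean embeddings have absolute value `> 1`. -/
theorem largeness_of_big_norm (K : Type) [Field K] [NumberField K]
    (A : Ideal (𝓞 K)) (hA : A ≠ ⊥) (hP : Submodule.IsPrincipal A)
    (h : rhoInf K < Real.log (Ideal.absNorm A : ℝ) / (Module.finrank ℚ K : ℝ)) :
    ∃ x : 𝓞 K, A = Ideal.span {x} ∧
      ∀ σ : K →+* ℂ, 1 < ‖σ (x : K)‖ := by
  obtain ⟨y, rfl⟩ := hP.principal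
  have hy : y ≠ 0 := by rintro rfl; simp at hA
  set n := Real.log (Ideal.absNorm (Ideal.span {y}) : ℝ) / (Module.finrank ℚ K : ℝ)
  let v : InfinitePlace K → ℝ := fun w => w.mult * (Real.log (w y) - n)
  have hv : ∑ w, v w = 0 := by
    have hd : (Module.finrank ℚ K : ℝ) ≠ 0 := Nat.cast_ne_zero.mpr Module.finrank_pos.ne'
    simp only [v, mul_sub, Finset.sum_sub_distrib, sum_mult_mul_log_eq_log_absNorm,
      ← Finset.sum_mul, ← Nat.cast_sum, sum_mult_eq, n]
    rw [mul_div_cancel₀ _ hd, sub_self]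
  obtain ⟨u, hu⟩ := exists_unit_norm_sub_logEmb_lt hv h
  refine ⟨y * ↑(u⁻¹), ?_, fun σ => ?_⟩
  · exact (Ideal.span_singleton_mul_right_unit u⁻¹.isUnit y).symm
  rw [← InfinitePlace.apply σ]
  refine Real.one_lt_of_abs_mul_log_sub_lt (n := n) (one_le_mult (w := mk σ)) (apply_nonneg _ _) ?_
  calc _ = |(v - logEmb K u) (mk σ)| := by
        rw [mul_sub, mult_mul_log_mul_unit_inv _ hy]; simp only [v, Pi.sub_apply]; congr 1; ring
    _ ≤ ‖v - logEmb K u‖ := by rw [← Real.norm_eq_abs]; exact norm_le_pi_norm _ _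
    _ < n := hu
end

section
/- Let K be a number field. All but finitely many nonzero principal ideals of O_K are strictly large; that is, the set of nonzero principal ideals of O_K that do not have a generator x with |σ(x)| > 1 for all embeddings σ : K → ℂ is finite. -/
/-!
Up to a unit, a nonzero `x ∈ 𝓞 K` lies in the fundamental cone, where the vector
`(log |σ x| - log |N x| / d)_σ` is bounded: its coordinates away from one place are the `logMap`,
which ranges over a bounded fundamental domain of the unit lattice, and the weighted sum of all
coordinates vanishes. Hence `log |σ x| ≥ log |N x| / d - C` for every `σ`, which is positive as soon
as `|N x|` is large, and only finitely many ideals have bounded norm.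
-/

open NumberField

open Finset in
theorem abs_le_card_sub_one_nsmul_of_sum_eq_zero {ι G : Type*} [Fintype ι] [DecidableEq ι]
    [AddCommGroup G] [LinearOrder G] [IsOrderedAddMonoid G] {f : ι → G} (hf : ∑ i, f i = 0)
    {i₀ : ι} {C : G} (hC : ∀ i ≠ i₀, |f i| ≤ C) : |f i₀| ≤ (Fintype.card ι - 1) • C := by
  have hrest : f i₀ = -∑ i ∈ univ.erase i₀, f i := by
    rw [eq_neg_iff_add_eq_zero, add_sum_erase _ _ (mem_univ i₀), hf]
  calc |f i₀| ≤ ∑ i ∈ univ.erase i₀, |f i| := by rw [hrest, abs_neg]; exact abs_sum_le_sum_abs _ _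
    _ ≤ (univ.erase i₀).card • C := sum_le_card_nsmul _ _ _ fun i hi ↦ hC i (ne_of_mem_erase hi)
    _ = (Fintype.card ι - 1) • C := by rw [card_erase_of_mem (mem_univ i₀), card_univ]

namespace NumberField.mixedEmbedding

open InfinitePlace NumberField.Units NumberField.Units.dirichletUnitTheorem Module

variable {K : Type*} [Field K] [NumberField K]

theorem exists_abs_logMap_le :
    ∃ C : ℝ, 0 ≤ C ∧ ∀ x ∈ fundamentalCone K, ∀ w, |logMap x w| ≤ C := by
  classical
  obtain ⟨C, hC⟩ := (ZSpan.fundamentalDomain_isBounded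
    ((basisUnitLattice K).ofZLatticeBasis ℝ _)).exists_norm_le
  exact ⟨max C 0, le_max_right _ _, fun x hx w ↦
    (norm_le_pi_norm (logMap x) w).trans ((hC _ hx.1).trans (le_max_left _ _))⟩

theorem log_norm_eq_sum_mult_mul_log_normAtPlace {x : mixedSpace K}
    (hx : ∀ w, normAtPlace w x ≠ 0) :
    Real.log (mixedEmbedding.norm x) = ∑ w, mult w * Real.log (normAtPlace w x) := by
  rw [mixedEmbedding.norm_apply, Real.log_prod fun w _ ↦ pow_ne_zero _ (hx w)]
  simp_rw [Real.log_pow]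

theorem exists_log_norm_div_sub_le_log_normAtPlace :
    ∃ C : ℝ, ∀ x ∈ fundamentalCone K, ∀ w,
      Real.log (mixedEmbedding.norm x) / finrank ℚ K - C ≤ Real.log (normAtPlace w x) := by
  classical
  obtain ⟨C, hC0, hC⟩ := exists_abs_logMap_le (K := K)
  set n : ℝ := (Fintype.card (InfinitePlace K) : ℝ)
  have hn : 1 ≤ n := Nat.one_le_cast.mpr Fintype.card_pos
  refine ⟨n * C, fun x hx w ↦ ?_⟩
  set d : ℝ := (finrank ℚ K : ℝ)
  have hd : 0 < d := Nat.cast_pos.mpr finrank_pos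
  set v : InfinitePlace K → ℝ := fun w ↦
    Real.log (normAtPlace w x) - Real.log (mixedEmbedding.norm x) * d⁻¹ with hv
  have hsum : ∑ w, mult w * v w = 0 := by
    have hmult : ∑ w : InfinitePlace K, (mult w : ℝ) = d := by
      rw [← Nat.cast_sum, sum_mult_eq]
    simp only [hv, mul_sub, Finset.sum_sub_distrib, ← Finset.sum_mul, hmult,
      ← log_norm_eq_sum_mult_mul_log_normAtPlace fun w ↦
        (fundamentalCone.normAtPlace_pos_of_mem hx w).ne']
    field_simp; ring
  -- the coordinates at `w ≠ w₀` are those of `logMap x`, and they determine the one at `w₀`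
  have hbound : |mult w * v w| ≤ n * C := by
    by_cases hw : w = w₀
    · subst hw
      have := abs_le_card_sub_one_nsmul_of_sum_eq_zero hsum
        fun w hw ↦ hC x hx ⟨w, hw⟩
      rw [nsmul_eq_mul, Nat.cast_pred Fintype.card_pos] at this
      linarith
    · exact (hC x hx ⟨w, hw⟩).trans (le_mul_of_one_le_left hC0 hn)
  have hvw : -(n * C) ≤ v w := by
    have hnC : 0 ≤ n * C := by positivity
    rcases le_or_gt 0 (v w) with hpos | hneg
    · linarith
    · nlinarith [(abs_le.mp hbound).1, mul_le_mul_of_nonpos_right (one_le_mult (w := w)) hneg.le]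
  rw [div_eq_mul_inv]
  linarith

theorem exists_one_lt_normAtPlace_of_lt_norm :
    ∃ B : ℝ, ∀ x ∈ fundamentalCone K, B < mixedEmbedding.norm x →
      ∀ w, 1 < normAtPlace w x := by
  obtain ⟨C, hC⟩ := exists_log_norm_div_sub_le_log_normAtPlace (K := K)
  have hd : 0 < (finrank ℚ K : ℝ) := Nat.cast_pos.mpr finrank_pos
  refine ⟨Real.exp (finrank ℚ K * C), fun x hx hB w ↦ ?_⟩
  have hlog : finrank ℚ K * C < Real.log (mixedEmbedding.norm x) :=
    (Real.lt_log_iff_exp_lt (fundamentalCone.norm_pos_of_mem hx)).mpr hB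
  have : C < Real.log (mixedEmbedding.norm x) / finrank ℚ K := by
    rw [lt_div_iff₀ hd, mul_comm]
    exact hlog
  exact (Real.log_pos_iff (fundamentalCone.normAtPlace_pos_of_mem hx w).le).mp
    (by linarith [hC x hx w])

theorem norm_mixedEmbedding_eq_absNorm_span_singleton (x : 𝓞 K) :
    mixedEmbedding.norm (mixedEmbedding K (x : K)) = Ideal.absNorm (Ideal.span {x}) := by
  rw [norm_eq_norm, Ideal.absNorm_span_singleton, ← Algebra.coe_norm_int, Nat.cast_natAbs]
  push_cast
  rfl

theorem exists_span_singleton_eq_of_lt_absNorm :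
    ∃ B : ℕ, ∀ x : 𝓞 K, x ≠ 0 → B < Ideal.absNorm (Ideal.span {x}) →
      ∃ y : 𝓞 K, Ideal.span {x} = Ideal.span {y} ∧ ∀ σ : K →+* ℂ, 1 < ‖σ (y : K)‖ := by
  obtain ⟨B, hB⟩ := exists_one_lt_normAtPlace_of_lt_norm (K := K)
  refine ⟨⌈B⌉₊, fun x hx hlt ↦ ?_⟩
  have hN := norm_mixedEmbedding_eq_absNorm_span_singleton x
  obtain ⟨u, hu⟩ := fundamentalCone.exists_unit_smul_mem (x := mixedEmbedding K (x : K))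
    (by simpa [hN] using hx)
  refine ⟨u * x, (Ideal.span_singleton_mul_left_unit u.isUnit x).symm, fun σ ↦ ?_⟩
  have := hB _ hu (by
    rw [norm_unit_smul, hN]
    exact (Nat.le_ceil B).trans_lt (by exact_mod_cast hlt)) (InfinitePlace.mk σ)
  rwa [unitSMul_smul, ← map_mul, normAtPlace_apply, InfinitePlace.apply] at this

end NumberField.mixedEmbedding

open NumberField.mixedEmbedding in
/-- All but finitely many nonzero principal ideals of `𝓞 K` are strictly large:
the set of nonzero principal ideals having no generator `x` with `|σ(x)| > 1` for
every embedding `σ : K → ℂ` is finite. -/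
theorem finitely_many_non_strictly_large (K : Type) [Field K] [NumberField K] :
    {A : Ideal (𝓞 K) | A ≠ ⊥ ∧ Submodule.IsPrincipal A ∧
      ¬ ∃ x : 𝓞 K, A = Ideal.span {x} ∧
        ∀ σ : K →+* ℂ, 1 < ‖σ (x : K)‖}.Finite := by
  obtain ⟨B, hB⟩ := exists_span_singleton_eq_of_lt_absNorm (K := K)
  refine (Ideal.finite_setOfPred_absNorm_le B).subset ?_
  rintro A ⟨hA, ⟨x, rfl⟩, hlarge⟩
  by_contra! hlt
  exact hlarge (hB x (by simpa using hA) (not_le.mp hlt))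
end

section
/- Let K be a number field and 𝔄 a nonzero proper ideal of O_K (𝔄 ⊊ O_K, 𝔄 ≠ 0). Then there exists a finite extension L of K and an element x ∈ O_L such that 𝔄 O_L = x O_L and |τ(x)| > 1 for every embedding τ : L → ℂ; i.e., 𝔄 becomes strictly large in a suitable finite extension of K. -/
/-!
Let `h` be the class number, so `𝔄 ^ h = (α)` with `|N(α)| > 1`. By Dirichlet's unit theorem the
log-embeddings of units are within bounded distance of every point of the trace-zero hyperplane;
since the log-vector of `α ^ k` has coordinate sum `k log |N(α)| → ∞`, a unit `u` can shift it so
that every coordinate of `u α ^ k` is positive, i.e. `|σ(u α ^ k)| > 1` for every embedding `σ`.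
Adjoining an `hk`-th root `x` of `u α ^ k` then gives `(x) ^ hk = (𝔄 𝓞_L) ^ hk`, hence
`(x) = 𝔄 𝓞_L` by unique factorisation of ideals, and `|τ(x)| = |τ(u α ^ k)| ^ (1 / hk) > 1`.
-/

open scoped IntermediateField

open NumberField

theorem UniqueFactorizationMonoid.eq_of_pow_eq_pow {M : Type*} [CommMonoidWithZero M]
    [UniqueFactorizationMonoid M] [Subsingleton Mˣ] {a b : M} {n : ℕ} (hn : n ≠ 0)
    (h : a ^ n = b ^ n) : a = b :=
  dvd_antisymm ((pow_dvd_pow_iff_dvd hn).mp h.dvd) ((pow_dvd_pow_iff_dvd hn).mp h.symm.dvd)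

theorem abs_le_sum_abs_subtype_ne_of_sum_eq_zero {ι M : Type*} [Fintype ι] [DecidableEq ι]
    [AddCommGroup M] [LinearOrder M] [IsOrderedAddMonoid M] {f : ι → M} (hf : ∑ i, f i = 0)
    (i₀ i : ι) : |f i| ≤ ∑ j : {j // j ≠ i₀}, |f j| := by
  by_cases hi : i = i₀
  · subst hi
    rw [Fintype.sum_eq_add_sum_subtype_ne _ i, add_eq_zero_iff_eq_neg] at hf
    rw [hf, abs_neg]
    exact Finset.abs_sum_le_sum_abs _ _
  · exact Finset.single_le_sum (f := fun j : {j // j ≠ i₀} => |f j|) (fun _ _ => abs_nonneg _)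
      (Finset.mem_univ ⟨i, hi⟩)

theorem Ideal.isPrincipal_pow_card_classGroup {R : Type*} [CommRing R] [IsDedekindDomain R]
    [Fintype (ClassGroup R)] (I : Ideal R) : (I ^ Fintype.card (ClassGroup R)).IsPrincipal := by
  by_cases hI : I = 0
  · rw [hI, zero_pow Fintype.card_ne_zero]
    exact bot_isPrincipal
  have hI' := mem_nonZeroDivisors_of_ne_zero hI
  rw [← ClassGroup.mk0_eq_one_iff (pow_mem hI' _), ← SubmonoidClass.mk_pow, map_pow,
    pow_card_eq_one]
  exact hI'

theorem Ideal.map_eq_span_singleton_of_pow_eq {R S : Type*} [CommRing R] [CommRing S]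
    [IsDedekindDomain S] [Algebra R S] {I : Ideal R} {c : R} {x : S} {n : ℕ} (hn : n ≠ 0)
    (hc : I ^ n = span {c}) (hx : x ^ n = algebraMap R S c) :
    I.map (algebraMap R S) = span {x} :=
  UniqueFactorizationMonoid.eq_of_pow_eq_pow hn <| by
    rw [← Ideal.map_pow, hc, Ideal.map_span, Set.image_singleton, Ideal.span_singleton_pow, hx]

theorem NumberField.one_lt_abs_norm_of_span_singleton_ne {K : Type*} [Field K] [NumberField K]
    {α : 𝓞 K} (h0 : Ideal.span {α} ≠ ⊥) (h1 : Ideal.span {α} ≠ ⊤) :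
    1 < |Algebra.norm ℚ (α : K)| := by
  have h0' := mt Ideal.absNorm_eq_zero_iff.mp h0
  have h1' := mt Ideal.absNorm_eq_one_iff.mp h1
  rw [Ideal.absNorm_span_singleton] at h0' h1'
  rw [← Algebra.coe_norm_int, ← Int.cast_abs, Int.abs_eq_natAbs]
  exact_mod_cast (by omega : 1 < (Algebra.norm ℤ α).natAbs)

namespace NumberField.Units

open dirichletUnitTheorem

variable (K : Type*) [Field K] [NumberField K]

theorem exists_abs_sub_logEmbedding_le :
    ∃ C : ℝ, ∀ y : logSpace K, ∃ u : (𝓞 K)ˣ,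
      ∀ w, |y w - logEmbedding K (Additive.ofMul u) w| ≤ C := by
  classical
  let b := (basisUnitLattice K).ofZLatticeBasis ℝ (unitLattice K)
  refine ⟨∑ i, ‖b i‖, fun y => ?_⟩
  have hfloor : (ZSpan.floor b y : logSpace K) ∈ unitLattice K := by
    rw [← (basisUnitLattice K).ofZLatticeBasis_span ℝ]
    exact (ZSpan.floor b y).2
  obtain ⟨u, -, hu⟩ := Submodule.mem_map.mp hfloor
  refine ⟨Additive.toMul u, fun w => ?_⟩
  have hfract : y - logEmbedding K (Additive.ofMul (Additive.toMul u)) = ZSpan.fract b y := by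
    rw [ZSpan.fract_apply, ← hu]
    rfl
  calc |y w - logEmbedding K (Additive.ofMul (Additive.toMul u)) w|
      = ‖(ZSpan.fract b y) w‖ := by rw [← hfract]; rfl
    _ ≤ ‖ZSpan.fract b y‖ := norm_le_pi_norm _ w
    _ ≤ ∑ i, ‖b i‖ := ZSpan.norm_fract_le b y

theorem exists_abs_mult_log_sub_le :
    ∃ C : ℝ, ∀ y : InfinitePlace K → ℝ, ∑ w, y w = 0 →
      ∃ u : (𝓞 K)ˣ, ∀ w, |w.mult * Real.log (w u) - y w| ≤ C := by
  classical
  obtain ⟨C, hC⟩ := exists_abs_sub_logEmbedding_le K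
  refine ⟨Fintype.card {w : InfinitePlace K // w ≠ w₀} * C, fun y hy => ?_⟩
  obtain ⟨u, hu⟩ := hC fun w => y w
  refine ⟨u, fun w => ?_⟩
  have hsum : ∑ w : InfinitePlace K, (w.mult * Real.log (w u) - y w) = 0 := by
    rw [Finset.sum_sub_distrib, sum_mult_mul_log, hy, sub_zero]
  calc |w.mult * Real.log (w u) - y w|
      ≤ ∑ w' : {w' : InfinitePlace K // w' ≠ w₀}, |w'.1.mult * Real.log (w'.1 u) - y w'| :=
        abs_le_sum_abs_subtype_ne_of_sum_eq_zero hsum w₀ w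
    _ ≤ ∑ _w' : {w' : InfinitePlace K // w' ≠ w₀}, C :=
        Finset.sum_le_sum fun w' _ => by rw [abs_sub_comm]; exact hu w'
    _ = Fintype.card {w : InfinitePlace K // w ≠ w₀} * C := by
        rw [Finset.sum_const, Finset.card_univ, nsmul_eq_mul]

variable {K} in
theorem exists_unit_mul_pow_one_lt {x : K} (hx : 1 < |Algebra.norm ℚ x|) :
    ∃ (u : (𝓞 K)ˣ) (k : ℕ), k ≠ 0 ∧ ∀ w : InfinitePlace K, 1 < w (u * x ^ k) := by
  have hx0 : x ≠ 0 := by rintro rfl; norm_num at hx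
  set D : ℝ := Real.log (|Algebra.norm ℚ x| : ℚ) with hD_def
  have hD : 0 < D := Real.log_pos (by exact_mod_cast hx)
  have hsum : ∑ w : InfinitePlace K, w.mult * Real.log (w x) = D := by
    rw [hD_def, ← InfinitePlace.prod_eq_abs_norm,
      Real.log_prod fun w _ => pow_ne_zero _ ((map_ne_zero w).mpr hx0)]
    simp_rw [Real.log_pow]
  set n : ℝ := (Fintype.card (InfinitePlace K) : ℝ)
  have hn : 0 < n := Nat.cast_pos.mpr Fintype.card_pos
  obtain ⟨C, hC⟩ := exists_abs_mult_log_sub_le K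
  obtain ⟨k, hk⟩ := exists_nat_gt (n * C / D)
  -- aim at the point where `u * x ^ k` has all log-coordinates equal to `k * D / n`
  obtain ⟨u, hu⟩ := hC (fun w => k * D / n - k * (w.mult * Real.log (w x))) (by
    rw [Finset.sum_sub_distrib, ← Finset.mul_sum, hsum, Finset.sum_const, Finset.card_univ,
      nsmul_eq_mul]
    field_simp
    ring)
  have hCD : C < k * D / n := by
    rw [div_lt_iff₀ hD] at hk
    rw [lt_div_iff₀ hn]
    linarith
  have hC0 : 0 ≤ C := (abs_nonneg _).trans (hu (Classical.arbitrary _))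
  refine ⟨u, k, ?_, fun w => ?_⟩
  · rintro rfl
    simp only [CharP.cast_eq_zero, zero_mul, zero_div] at hCD
    linarith
  have hlog : w.mult * Real.log (w (u * x ^ k))
      = w.mult * Real.log (w u) + k * (w.mult * Real.log (w x)) := by
    rw [map_mul, map_pow, Real.log_mul (by simp) (by simp [hx0]), Real.log_pow]
    ring
  have hpos : 0 < w.mult * Real.log (w (u * x ^ k)) := by
    have := (abs_le.mp (hu w)).1
    linarith
  exact (Real.log_pos_iff (by positivity)).mp (pos_of_mul_pos_right hpos (by positivity))

end NumberField.Units

theorem NumberField.one_lt_norm_of_pow_eq {K L : Type*} [Field K] [Field L] [Algebra K L]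
    {a : K} (ha : ∀ w : InfinitePlace K, 1 < w a) {x : L} {n : ℕ} (hn : n ≠ 0)
    (hx : x ^ n = algebraMap K L a) (τ : L →+* ℂ) : 1 < ‖τ x‖ := by
  have := ha (InfinitePlace.mk (τ.comp (algebraMap K L)))
  rw [InfinitePlace.apply, RingHom.comp_apply, ← hx, map_pow, norm_pow] at this
  exact (one_lt_pow_iff_of_nonneg (norm_nonneg _) hn).mp this

theorem NumberField.exists_pow_eq_algebraMap (K : Type) [Field K] [NumberField K] (a : 𝓞 K)
    {n : ℕ} (hn : n ≠ 0) :
    ∃ (L : Type) (_ : Field L) (_ : NumberField L) (_ : Algebra K L),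
      ∃ x : 𝓞 L, x ^ n = algebraMap (𝓞 K) (𝓞 L) a := by
  obtain ⟨β, hβ⟩ := IsAlgClosed.exists_pow_nat_eq (algebraMap K (AlgebraicClosure K) a)
    (Nat.pos_of_ne_zero hn)
  have hβK : IsIntegral K β :=
    ⟨Polynomial.X ^ n - Polynomial.C (a : K), Polynomial.monic_X_pow_sub_C _ hn, by simp [hβ]⟩
  have : FiniteDimensional K K⟮β⟯ := IntermediateField.adjoin.finiteDimensional hβK
  have : NumberField K⟮β⟯ := NumberField.of_module_finite K K⟮β⟯
  let y : K⟮β⟯ := IntermediateField.AdjoinSimple.gen K β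
  have hy : y ^ n = (algebraMap (𝓞 K) (𝓞 K⟮β⟯) a : K⟮β⟯) := Subtype.ext hβ
  have hyℤ : IsIntegral ℤ y :=
    IsIntegral.of_pow (Nat.pos_of_ne_zero hn) (hy ▸ (algebraMap (𝓞 K) (𝓞 K⟮β⟯) a).isIntegral_coe)
  exact ⟨K⟮β⟯, inferInstance, inferInstance, inferInstance, ⟨y, hyℤ⟩, RingOfIntegers.ext hy⟩

/-- Every nonzero proper ideal `𝔄 ⊊ 𝓞 K` becomes strictly large in a suitable finite
extension `L` of `K`: the extended ideal `𝔄 𝓞_L` is generated by an element `x` with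
`|τ(x)| > 1` for every embedding `τ : L → ℂ`. (An extension of number fields is
automatically finite.) -/
theorem strictly_large_in_finite_extension (K : Type) [Field K] [NumberField K]
    (A : Ideal (𝓞 K)) (hA : A ≠ ⊥) (hA' : A ≠ ⊤) :
    ∃ (L : Type) (_ : Field L) (_ : NumberField L) (_ : Algebra K L),
      ∃ x : 𝓞 L, Ideal.map (algebraMap (𝓞 K) (𝓞 L)) A = Ideal.span {x} ∧
        ∀ τ : L →+* ℂ, 1 < ‖τ (x : L)‖ := by
  set h := Fintype.card (ClassGroup (𝓞 K))
  have hh : h ≠ 0 := Fintype.card_ne_zero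
  obtain ⟨α, hα⟩ := A.isPrincipal_pow_card_classGroup
  rw [Ideal.submodule_span_eq] at hα
  have hα_ne_bot : Ideal.span {α} ≠ ⊥ := hα ▸ pow_ne_zero h hA
  have hα_ne_top : Ideal.span {α} ≠ ⊤ :=
    hα ▸ fun e => hA' (eq_top_iff.mpr (e ▸ Ideal.pow_le_self hh))
  obtain ⟨u, k, hk, hlarge⟩ := Units.exists_unit_mul_pow_one_lt
    (one_lt_abs_norm_of_span_singleton_ne hα_ne_bot hα_ne_top)
  have hN : h * k ≠ 0 := mul_ne_zero hh hk
  have hc : A ^ (h * k) = Ideal.span {(u * α ^ k : 𝓞 K)} := by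
    rw [pow_mul, hα, Ideal.span_singleton_pow, Ideal.span_singleton_mul_left_unit u.isUnit]
  obtain ⟨L, _, _, _, x, hx⟩ := exists_pow_eq_algebraMap K (u * α ^ k) hN
  refine ⟨L, inferInstance, inferInstance, inferInstance, x,
    Ideal.map_eq_span_singleton_of_pow_eq hN hc hx, fun τ => ?_⟩
  exact one_lt_norm_of_pow_eq (a := ((u * α ^ k : 𝓞 K) : K)) (by simpa using hlarge) hN
    (congrArg ((↑) : 𝓞 L → L) hx) τ
end

section
/- Let x be a nonzero algebraic integer such that the field ℚ(x) is either totally real or a CM field, and suppose n(x) < (1/2)·log((1+√5)/2) and x is not a unit. Then for every finite extension K' of ℚ(x) that is totally real or CM, the ideal x O_{K'} is not large: no generator y of x O_{K'} satisfies |σ(y)| ≥ 1 for all embeddings σ : K' → ℂ. -/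
open NumberField

/-- A number field is totally real if all its infinite places are real. -/
def IsTotallyRealField (K : Type) [Field K] : Prop :=
  ∀ v : NumberField.InfinitePlace K, v.IsReal

/-- A CM field: a totally imaginary number field which is a quadratic extension of a
totally real subfield. -/
def IsCMField (K : Type) [Field K] : Prop :=
  (∀ v : NumberField.InfinitePlace K, v.IsComplex) ∧
  ∃ F : Subfield K, IsTotallyRealField F ∧ Module.finrank F K = 2

/-!
If `y` is large in a totally real field `L = K'`, resp. in a CM field `K'` with totally real `L`
and `[K' : L] = 2`, then `β = y²`, resp. `β = N_{K'/L}(y)`, is an algebraic integer of `L` all of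
whose conjugates are real and `≥ 1`, and `β ≠ 1` when `y` is not a unit. For each conjugate `r`,
`r² ≥ 4 (r - 1) ≥ 0`, and `N_{L/ℚ}(β - 1)` is a nonzero integer, so `N_{L/ℚ}(β)² ≥ 4 ^ [L : ℚ]`;
in both cases this gives `N_{K'/ℚ}(y)² ≥ 2 ^ [K' : ℚ]`. If `y` generates `x 𝓞_{K'}`, then
`|N_{K'/ℚ}(y)| = |N_{K/ℚ}(x)| ^ [K' : K]`, hence `|N_{K/ℚ}(x)|² ≥ 2 ^ [K : ℚ]`, i.e.
`n(x) ≥ ½ log 2 > ½ log φ`.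
-/

open NumberField.ComplexEmbedding Module Finset Real ComplexConjugate

def IsLarge {L : Type*} [Field L] (y : L) : Prop :=
  ∀ σ : L →+* ℂ, 1 ≤ ‖σ y‖

theorem IsTotallyRealField.isReal {L : Type} [Field L] (hL : IsTotallyRealField L)
    (ψ : L →+* ℂ) : ComplexEmbedding.IsReal ψ :=
  InfinitePlace.isReal_mk_iff.mp (hL _)

section NormBounds

variable {L : Type*} [Field L] [NumberField L]

theorem one_le_abs_norm {z : 𝓞 L} (hz : z ≠ 0) : (1 : ℝ) ≤ |(Algebra.norm ℚ (z : L) : ℝ)| := by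
  rw [← Algebra.coe_norm_int, Rat.cast_intCast, ← Int.cast_abs]
  exact_mod_cast Int.one_le_abs (Algebra.norm_ne_zero_iff.mpr hz)

theorem abs_norm_eq_absNorm_span (z : 𝓞 L) :
    |(Algebra.norm ℚ (z : L) : ℝ)| = Ideal.absNorm (Ideal.span {z}) := by
  rw [Ideal.absNorm_span_singleton, ← Algebra.coe_norm_int, Rat.cast_intCast, Nat.cast_natAbs,
    Int.cast_abs]

theorem abs_norm_eq_one_iff_isUnit {z : 𝓞 L} : |(Algebra.norm ℚ (z : L) : ℝ)| = 1 ↔ IsUnit z := by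
  rw [isUnit_iff_norm, RingOfIntegers.coe_norm, ← Rat.cast_abs]
  exact_mod_cast Iff.rfl

theorem norm_eq_prod_of_forall_eq_ofReal {z : L} {r : (L →+* ℂ) → ℝ} (hr : ∀ ψ, ψ z = r ψ) :
    (Algebra.norm ℚ z : ℝ) = ∏ ψ : L →ₐ[ℚ] ℂ, r ψ := by
  apply Complex.ofReal_injective
  rw [Complex.ofReal_ratCast, ← eq_ratCast (algebraMap ℚ ℂ), Algebra.norm_eq_prod_embeddings,
    Complex.ofReal_prod]
  exact prod_congr rfl fun ψ _ => hr ψ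

theorem two_pow_finrank_le_abs_norm {β : 𝓞 L} (hβ : β ≠ 1) {r : (L →+* ℂ) → ℝ}
    (hr1 : ∀ ψ, 1 ≤ r ψ) (hr : ∀ ψ, ψ β = r ψ) :
    (2 : ℝ) ^ finrank ℚ L ≤ |(Algebra.norm ℚ (β : L) : ℝ)| := by
  have hN := norm_eq_prod_of_forall_eq_ofReal hr
  have hN1 : (Algebra.norm ℚ ((β - 1 : 𝓞 L) : L) : ℝ) = ∏ ψ : L →ₐ[ℚ] ℂ, (r ψ - 1) :=
    norm_eq_prod_of_forall_eq_ofReal (r := (r · - 1)) fun ψ => by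
      push_cast; rw [map_sub, map_one, hr ψ]
  have hone : 1 ≤ ∏ ψ : L →ₐ[ℚ] ℂ, (r ψ - 1) := by
    have hnonneg : 0 ≤ ∏ ψ : L →ₐ[ℚ] ℂ, (r ψ - 1) := prod_nonneg fun ψ _ => sub_nonneg.2 (hr1 ψ)
    simpa only [hN1, abs_of_nonneg hnonneg] using one_le_abs_norm (sub_ne_zero.2 hβ)
  have hsq : ((2 : ℝ) ^ finrank ℚ L) ^ 2 ≤ |(Algebra.norm ℚ (β : L) : ℝ)| ^ 2 := calc
    ((2 : ℝ) ^ finrank ℚ L) ^ 2 = ∏ _ψ : L →ₐ[ℚ] ℂ, (4 : ℝ) := by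
      rw [prod_const, card_univ, AlgHom.card, ← pow_mul, mul_comm, pow_mul]; norm_num
    _ ≤ ∏ ψ : L →ₐ[ℚ] ℂ, 4 * (r ψ - 1) := by
      rw [prod_mul_distrib]; exact le_mul_of_one_le_right (by positivity) hone
    _ ≤ ∏ ψ : L →ₐ[ℚ] ℂ, r ψ ^ 2 :=
      prod_le_prod (fun ψ _ => by nlinarith [hr1 ψ]) fun ψ _ => by nlinarith [sq_nonneg (r ψ - 2)]
    _ = |(Algebra.norm ℚ (β : L) : ℝ)| ^ 2 := by rw [sq_abs, hN, prod_pow]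
  exact (pow_le_pow_iff_left₀ (by positivity) (abs_nonneg _) two_ne_zero).1 hsq

end NormBounds

/-- The two extensions of the real embedding `τ` to `E` are `ψ` and its complex conjugate, which
differ because `ψ` is not real. -/
theorem exists_map_norm_eq_sq_norm {F E : Type*} [Field F] [Field E] [Algebra F E] [CharZero F]
    (hE : ∀ ψ : E →+* ℂ, ¬ ComplexEmbedding.IsReal ψ) (h2 : finrank F E = 2) {τ : F →+* ℂ}
    (hτ : ComplexEmbedding.IsReal τ) (y : E) :
    ∃ ψ : E →+* ℂ, τ (Algebra.norm F y) = ((‖ψ y‖ ^ 2 : ℝ) : ℂ) := by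
  classical
  have : FiniteDimensional F E := Module.finite_of_finrank_eq_succ h2
  let : Algebra F ℂ := τ.toAlgebra
  obtain ⟨ψ⟩ : Nonempty (E →ₐ[F] ℂ) := Fintype.card_pos_iff.mp (by rw [AlgHom.card, h2]; norm_num)
  let ψbar : E →ₐ[F] ℂ :=
    { conjugate (ψ : E →+* ℂ) with
      commutes' := fun f => by
        simpa [RingHom.algebraMap_toAlgebra] using RingHom.congr_fun (isReal_iff.mp hτ) f }
  have hne : ψ ≠ ψbar := fun h => hE ψ <| isReal_iff.mpr <| RingHom.ext fun z =>
    (congrArg (· z) h).symm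
  have huniv : (univ : Finset (E →ₐ[F] ℂ)) = {ψ, ψbar} :=
    (eq_univ_of_card _ (by rw [card_pair hne, AlgHom.card, h2])).symm
  refine ⟨ψ, ?_⟩
  rw [← RingHom.algebraMap_toAlgebra τ, Algebra.norm_eq_prod_embeddings, huniv, prod_pair hne]
  exact_mod_cast Complex.mul_conj' (ψ y)

theorem IsTotallyRealField.two_pow_finrank_le_sq_abs_norm {L : Type} [Field L] [NumberField L]
    (hL : IsTotallyRealField L) {y : 𝓞 L} (hy : IsLarge (y : L)) (hyu : ¬ IsUnit y) :
    (2 : ℝ) ^ finrank ℚ L ≤ |(Algebra.norm ℚ (y : L) : ℝ)| ^ 2 := by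
  have hsq : ∀ ψ : L →+* ℂ, ψ ((y ^ 2 : 𝓞 L) : L) = ((‖ψ y‖ ^ 2 : ℝ) : ℂ) := fun ψ => by
    have hconj : conj (ψ y) = ψ y := RingHom.congr_fun (isReal_iff.mp (hL.isReal ψ)) y
    push_cast
    rw [← Complex.mul_conj', hconj, map_pow, sq]
  have := two_pow_finrank_le_abs_norm (fun h => hyu (IsUnit.of_pow_eq_one h two_ne_zero))
    (fun ψ => one_le_pow₀ (hy ψ)) hsq
  simpa [map_pow, abs_pow] using this

theorem IsCMField.two_pow_finrank_le_sq_abs_norm {L : Type} [Field L] [NumberField L]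
    (hL : _root_.IsCMField L) {y : 𝓞 L} (hy : IsLarge (y : L)) (hyu : ¬ IsUnit y) :
    (2 : ℝ) ^ finrank ℚ L ≤ |(Algebra.norm ℚ (y : L) : ℝ)| ^ 2 := by
  obtain ⟨hcomplex, F, hF, h2⟩ := hL
  have : FiniteDimensional F L := Module.finite_of_finrank_eq_succ h2
  have : NumberField F := { to_finiteDimensional := FiniteDimensional.left ℚ F L }
  have hr (τ : F →+* ℂ) : ∃ ψ : L →+* ℂ, τ (RingOfIntegers.norm F y : F) = ((‖ψ y‖ ^ 2 : ℝ) : ℂ) :=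
    exists_map_norm_eq_sq_norm (fun ψ => InfinitePlace.isComplex_mk_iff.mp (hcomplex _)) h2
      (hF.isReal τ) y
  choose ψ hψ using hr
  have hnorm := two_pow_finrank_le_abs_norm
    (fun h => hyu ((RingOfIntegers.isUnit_norm F).mp (h ▸ isUnit_one)))
    (fun τ => one_le_pow₀ (hy (ψ τ))) hψ
  rw [RingOfIntegers.coe_norm, Algebra.norm_norm] at hnorm
  rw [← finrank_mul_finrank ℚ F L, h2, pow_mul]
  exact pow_le_pow_left₀ (by positivity) hnorm 2

open goldenRatio in
theorem sq_lt_goldenRatio_pow_of_log_div_lt {A : ℝ} (hA : 0 ≤ A) {d : ℕ} (hd : 0 < d)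
    (h : log A / d < 1 / 2 * log φ) : A ^ 2 < φ ^ d := by
  rcases hA.eq_or_lt with rfl | hA
  · simpa using pow_pos goldenRatio_pos d
  rw [← log_lt_log_iff (by positivity) (by positivity), log_pow, log_pow]
  rw [div_lt_iff₀ (by positivity)] at h
  push_cast
  linarith

theorem not_large_in_totally_real_or_CM_general (K : Type) [Field K] [NumberField K]
    (x : 𝓞 K)
    (hxsmall : Real.log |Algebra.norm ℚ (x : K)| / (Module.finrank ℚ K : ℝ) <
      (1 / 2) * Real.log ((1 + Real.sqrt 5) / 2))
    (hxunit : ¬ IsUnit x)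
    (K' : Type) [Field K'] [NumberField K'] [Algebra K K']
    (hK'type : IsTotallyRealField K' ∨ _root_.IsCMField K') :
    ¬ ∃ y : 𝓞 K',
      Ideal.span {y} = Ideal.span {algebraMap (𝓞 K) (𝓞 K') x} ∧
      ∀ σ : K' →+* ℂ, 1 ≤ ‖σ (y : K')‖ := by
  rintro ⟨y, hspan, hy⟩
  have : FiniteDimensional K K' := FiniteDimensional.right ℚ K K'
  set A := |(Algebra.norm ℚ (x : K) : ℝ)|
  have hNy : |(Algebra.norm ℚ (y : K') : ℝ)| = A ^ finrank K K' := by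
    rw [abs_norm_eq_absNorm_span, hspan, ← abs_norm_eq_absNorm_span]
    rw [show ((algebraMap (𝓞 K) (𝓞 K') x : 𝓞 K') : K') = algebraMap K K' x from rfl,
      ← Algebra.norm_norm (S := K), Algebra.norm_algebraMap, map_pow, Rat.cast_pow, abs_pow]
  have hyu : ¬ IsUnit y := by
    rwa [← abs_norm_eq_one_iff_isUnit, hNy, pow_eq_one_iff_of_nonneg (abs_nonneg _)
      finrank_pos.ne', abs_norm_eq_one_iff_isUnit]
  have hlarge := hK'type.elim (·.two_pow_finrank_le_sq_abs_norm hy hyu)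
    (·.two_pow_finrank_le_sq_abs_norm hy hyu)
  have hsmall : A ^ 2 < 2 ^ finrank ℚ K :=
    (sq_lt_goldenRatio_pow_of_log_div_lt (abs_nonneg _) finrank_pos hxsmall).trans
      (pow_lt_pow_left₀ goldenRatio_lt_two goldenRatio_pos.le finrank_pos.ne')
  rw [hNy, ← finrank_mul_finrank ℚ K K', pow_mul, ← pow_mul A, mul_comm _ 2, pow_mul A] at hlarge
  exact (pow_lt_pow_left₀ hsmall (by positivity) finrank_pos.ne').not_ge hlarge

/-- Let `x` be a nonzero algebraic integer, not a unit, generating the number field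
`K = ℚ(x)`, with `K` totally real or CM, and with logarithmic norm
`n(x) = log|N_{K/ℚ}(x)|/[K:ℚ] < (1/2)·log((1+√5)/2)`. Then for every finite extension `K'`
of `ℚ(x)` which is totally real or CM, the ideal `x 𝓞_{K'}` is not large: no generator `y`
of it satisfies `|σ(y)| ≥ 1` for all embeddings `σ : K' → ℂ`. -/
theorem not_large_in_totally_real_or_CM (K : Type) [Field K] [NumberField K]
    (x : 𝓞 K) (hx : x ≠ 0) (hxgen : IntermediateField.adjoin ℚ {(x : K)} = ⊤)
    (hKtype : IsTotallyRealField K ∨ _root_.IsCMField K)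
    (hxsmall : Real.log |Algebra.norm ℚ (x : K)| / (Module.finrank ℚ K : ℝ) <
      (1 / 2) * Real.log ((1 + Real.sqrt 5) / 2))
    (hxunit : ¬ IsUnit x)
    (K' : Type) [Field K'] [NumberField K'] [Algebra K K']
    (hK'type : IsTotallyRealField K' ∨ _root_.IsCMField K') :
    ¬ ∃ y : 𝓞 K',
      Ideal.span {y} = Ideal.span {algebraMap (𝓞 K) (𝓞 K') x} ∧
      ∀ σ : K' →+* ℂ, 1 ≤ ‖σ (y : K')‖ :=
  not_large_in_totally_real_or_CM_general K x hxsmall hxunit K' hK'type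
end

section
/- Let K be a number field with unit rank r ≥ 1. Then ρ_∞(K) ≥ (1/2)·R_K^{1/r}, where R_K is the regulator of K. -/
open NumberField

/-!
Write `ρ = ρ_∞(K)` and let `t > ρ`. A vector of `H` is determined by its coordinates away from a
fixed place `w₀`, and dropping that coordinate maps `ℓ(O_K^×)` onto the lattice whose covolume is
`R_K`. Every point of `ℝ^r` is therefore within sup-distance `t` of that lattice, so the translates
of the cube `[-t, t]^r` by the lattice cover `ℝ^r` and a fundamental domain has volume at most
`(2t)^r`, i.e. `R_K ≤ (2t)^r`. Letting `t ↓ ρ` gives `R_K^{1/r} ≤ 2ρ`.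
-/

open MeasureTheory Set
open scoped Pointwise

@[to_additive]
theorem MeasureTheory.IsFundamentalDomain.measure_le_of_iUnion_smul_eq_univ
    {G α : Type*} [Group G] [Countable G] [MulAction G α] [MeasurableSpace α]
    [MeasurableConstSMul G α] {μ : Measure α} [SMulInvariantMeasure G α μ] {s t : Set α}
    (hs : IsFundamentalDomain G s μ) (ht : ⋃ g : G, g • t = univ) :
    μ s ≤ μ t :=
  calc μ s = μ (⋃ g : G, g • t ∩ s) := by rw [← iUnion_inter, ht, univ_inter]
    _ ≤ ∑' g : G, μ (g • t ∩ s) := measure_iUnion_le _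
    _ = μ t := (hs.measure_eq_tsum t).symm

namespace ZLattice

section General

variable {E : Type*} [NormedAddCommGroup E] [NormedSpace ℝ E] [FiniteDimensional ℝ E]
  (L : Submodule ℤ E) [DiscreteTopology L] [IsZLattice ℝ L]

theorem exists_forall_exists_norm_sub_le : ∃ C, ∀ x : E, ∃ l ∈ L, ‖x - l‖ ≤ C := by
  let b := (Module.Free.chooseBasis ℤ L).ofZLatticeBasis ℝ L
  refine ⟨∑ i, ‖b i‖, fun x => ⟨ZSpan.floor b x, ?_, ZSpan.norm_fract_le b x⟩⟩
  exact ((Module.Free.chooseBasis ℤ L).ofZLatticeBasis_span ℝ L).le (ZSpan.floor b x).2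

theorem covolume_le_measure_of_iUnion_vadd_eq_univ [MeasurableSpace E] [BorelSpace E]
    (μ : Measure E) [μ.IsAddHaarMeasure] {t : Set E} (ht : ⋃ l : L, l +ᵥ t = univ)
    (hμt : μ t ≠ ⊤) : covolume L μ ≤ μ.real t := by
  have : MeasurableVAdd L E := (inferInstance : MeasurableVAdd L.toAddSubgroup E)
  have : VAddInvariantMeasure L E μ := (inferInstance : VAddInvariantMeasure L.toAddSubgroup E μ)
  have hF := isAddFundamentalDomain (Module.Free.chooseBasis ℤ L) μ
  rw [covolume_eq_measure_fundamentalDomain L μ hF]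
  exact ENNReal.toReal_mono hμt (hF.measure_le_of_iUnion_vadd_eq_univ ht)

end General

theorem covolume_le_two_mul_pow_of_forall_exists_norm_sub_le {ι : Type*} [Fintype ι]
    (L : Submodule ℤ (ι → ℝ)) [DiscreteTopology L] [IsZLattice ℝ L] {t : ℝ}
    (h : ∀ x, ∃ l ∈ L, ‖x - l‖ ≤ t) : covolume L ≤ (2 * t) ^ Fintype.card ι := by
  obtain ⟨l, hl, hl0⟩ := h 0
  have ht : 0 ≤ t := (norm_nonneg _).trans hl0
  have hcover : ⋃ l : L, l +ᵥ Metric.closedBall (0 : ι → ℝ) t = univ := by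
    refine eq_univ_of_forall fun x => ?_
    obtain ⟨l, hl, hxl⟩ := h x
    exact mem_iUnion.2 ⟨⟨l, hl⟩, x - l, by simpa using hxl, add_sub_cancel _ _⟩
  calc covolume L ≤ volume.real (Metric.closedBall (0 : ι → ℝ) t) :=
        covolume_le_measure_of_iUnion_vadd_eq_univ L volume hcover measure_closedBall_lt_top.ne
    _ = (2 * t) ^ Fintype.card ι := by
        rw [measureReal_def, Real.volume_pi_closedBall _ ht, ENNReal.toReal_ofReal (by positivity)]

end ZLattice

section SumZero

variable {ι : Type*} [Fintype ι] [DecidableEq ι]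

theorem norm_le_card_mul_norm_restrict_of_sum_eq_zero {f : ι → ℝ} (hf : ∑ i, f i = 0) (i₀ : ι) :
    ‖f‖ ≤ Fintype.card ι * ‖fun i : {i // i ≠ i₀} => f i‖ := by
  set g := fun i : {i // i ≠ i₀} => f i
  have hcard : (Fintype.card {i // i ≠ i₀} : ℝ) ≤ Fintype.card ι := by
    exact_mod_cast Fintype.card_subtype_le _
  have hone : (1 : ℝ) ≤ Fintype.card ι := by exact_mod_cast Fintype.card_pos_iff.2 ⟨i₀⟩
  refine pi_norm_le_iff_of_nonneg (by positivity) |>.2 fun i => ?_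
  by_cases hi : i = i₀
  · subst hi
    have hfi : f i = -∑ j, g j := by
      rw [Fintype.sum_eq_add_sum_subtype_ne f i] at hf
      linarith
    calc ‖f i‖ = ‖∑ j, g j‖ := by rw [hfi, norm_neg]
      _ ≤ ∑ j, ‖g j‖ := norm_sum_le _ _
      _ ≤ ∑ _j, ‖g‖ := Finset.sum_le_sum fun j _ => norm_le_pi_norm g j
      _ ≤ Fintype.card ι * ‖g‖ := by
        rw [Finset.sum_const, Finset.card_univ, nsmul_eq_mul]
        gcongr
  · calc ‖f i‖ = ‖g ⟨i, hi⟩‖ := rfl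
      _ ≤ ‖g‖ := norm_le_pi_norm g _
      _ ≤ Fintype.card ι * ‖g‖ := le_mul_of_one_le_left (norm_nonneg _) hone

theorem exists_sum_eq_zero_restrict_eq (i₀ : ι) (x : {i // i ≠ i₀} → ℝ) :
    ∃ f : ι → ℝ, ∑ i, f i = 0 ∧ (fun i : {i // i ≠ i₀} => f i) = x := by
  refine ⟨fun i => if h : i = i₀ then -∑ j, x j else x ⟨i, h⟩, ?_, ?_⟩
  · rw [Fintype.sum_eq_add_sum_subtype_ne _ i₀]
    simp [fun j : {i // i ≠ i₀} => j.2]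
  · ext ⟨i, hi⟩
    simp [hi]

end SumZero

namespace NumberField.Units

open dirichletUnitTheorem

variable {K : Type} [Field K] [NumberField K]

theorem sum_logEmb_eq_zero (u : (𝓞 K)ˣ) : ∑ w, logEmb K u w = 0 :=
  sum_mult_mul_log u

variable (K) in
theorem bddAbove_range_iInf_norm_sub_logEmb :
    BddAbove (Set.range fun v : {v : InfinitePlace K → ℝ // ∑ w, v w = 0} =>
      ⨅ u : (𝓞 K)ˣ, ‖(v : InfinitePlace K → ℝ) - logEmb K u‖) := by
  classical
  obtain ⟨C, hC⟩ := ZLattice.exists_forall_exists_norm_sub_le (unitLattice K)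
  refine ⟨Fintype.card (InfinitePlace K) * C, Set.forall_mem_range.2 fun v => ?_⟩
  obtain ⟨_, ⟨u, -, rfl⟩, hu⟩ := hC fun w => v.1 w
  have hsum : ∑ w, (v.1 - logEmb K (Additive.toMul u)) w = 0 := by
    simp [Finset.sum_sub_distrib, v.2, sum_logEmb_eq_zero]
  calc ⨅ u, ‖v.1 - logEmb K u‖ ≤ ‖v.1 - logEmb K (Additive.toMul u)‖ :=
        ciInf_le ⟨0, Set.forall_mem_range.2 fun _ => norm_nonneg _⟩ _
    _ ≤ Fintype.card (InfinitePlace K) * C :=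
        (norm_le_card_mul_norm_restrict_of_sum_eq_zero hsum w₀).trans (by gcongr; exact hu)

open scoped Classical in
theorem exists_mem_unitLattice_norm_sub_le_of_rhoInf_lt {t : ℝ} (ht : rhoInf K < t)
    (x : logSpace K) : ∃ l ∈ unitLattice K, ‖x - l‖ ≤ t := by
  obtain ⟨v, hv, rfl⟩ := exists_sum_eq_zero_restrict_eq w₀ x
  have hinf : ⨅ u : (𝓞 K)ˣ, ‖v - logEmb K u‖ < t :=
    (le_ciSup (bddAbove_range_iInf_norm_sub_logEmb K) ⟨v, hv⟩).trans_lt ht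
  obtain ⟨u, hu⟩ := exists_lt_of_ciInf_lt hinf
  refine ⟨logEmbedding K (Additive.ofMul u), ⟨Additive.ofMul u, trivial, rfl⟩, ?_⟩
  exact (pi_norm_comp_le (v - logEmb K u) Subtype.val).trans hu.le

theorem regulator_le_two_mul_pow_of_rhoInf_lt {t : ℝ} (ht : rhoInf K < t) :
    regulator K ≤ (2 * t) ^ rank K := by
  classical
  have h := ZLattice.covolume_le_two_mul_pow_of_forall_exists_norm_sub_le (unitLattice K)
    (exists_mem_unitLattice_norm_sub_le_of_rhoInf_lt ht)
  rwa [← Units.finrank_eq_rank, Module.finrank_fintype_fun_eq_card]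

end NumberField.Units

theorem rhoInf_nonneg (K : Type) [Field K] [NumberField K] : 0 ≤ rhoInf K :=
  Real.iSup_nonneg fun _ => Real.iInf_nonneg fun _ => norm_nonneg _

/-- For a number field `K` of unit rank `r ≥ 1`, the covering radius satisfies
`ρ_∞(K) ≥ (1/2)·R_K^{1/r}` where `R_K` is the regulator of `K`. -/
theorem rhoInf_ge_half_regulator_rpow (K : Type) [Field K] [NumberField K]
    (hr : 1 ≤ NumberField.Units.rank K) :
    (1 / 2 : ℝ) * (NumberField.Units.regulator K) ^
      ((1 : ℝ) / (NumberField.Units.rank K : ℝ)) ≤ rhoInf K := by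
  refine le_of_forall_gt_imp_ge_of_dense fun t ht => ?_
  have ht0 : 0 ≤ t := (rhoInf_nonneg K).trans ht.le
  calc _ ≤ 1 / 2 * ((2 * t) ^ Units.rank K) ^ ((1 : ℝ) / Units.rank K) := by
        gcongr
        · exact (Units.regulator_pos K).le
        · exact Units.regulator_le_two_mul_pow_of_rhoInf_lt ht
    _ = t := by
        rw [one_div (Units.rank K : ℝ), Real.pow_rpow_inv_natCast (by positivity) (by omega)]
        ring
end

section
/- Let K be a number field of degree d with unit rank r ≥ 1, and let 1 ≤ n ≤ r. Then ρ_∞(K) ≥ (d/s)·μ_K(n)^{1/n}, where μ_K(n) is the infimum of h(v₁)·…·h(v_n) over all n-tuples of multiplicatively independent units v₁,…,v_n ∈ O_K^×. -/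
open NumberField

/-- The Weil height of an algebraic integer `x ∈ 𝓞 K`. -/
noncomputable def weilHeight (K : Type) [Field K] [NumberField K] (x : 𝓞 K) : ℝ :=
  (∑ σ : K →+* ℂ, max 0 (Real.log ‖σ (x : K)‖)) / (Module.finrank ℚ K : ℝ)

/-- A family of units is multiplicatively independent if the only integer relation
`∏ v_i^{a_i} = 1` is the trivial one. -/
def MultIndep (K : Type) [Field K] [NumberField K] {n : ℕ} (v : Fin n → (𝓞 K)ˣ) : Prop :=
  ∀ e : Fin n → ℤ, (∏ i, v i ^ e i) = 1 → ∀ i, e i = 0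

/-- `μ_K(n)`: the infimum of `h(v₁)⋯h(v_n)` over all `n`-tuples of multiplicatively
independent units of `𝓞 K`. -/
noncomputable def muK (K : Type) [Field K] [NumberField K] (n : ℕ) : ℝ :=
  sInf {t : ℝ | ∃ v : Fin n → (𝓞 K)ˣ, MultIndep K v ∧
    t = ∏ i, weilHeight K ((v i : 𝓞 K))}

/-!
Vectors of `Λ_K` of sup norm at most `2ρ + ε` span the hyperplane `H`. Otherwise pick
`v ∈ H` outside their span `V` and lattice points `a_m` within `ρ` of `m t v` for a small
step `t`: consecutive `a_m` differ by such short vectors, so all `a_m` lie in one coset of `V`,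
whereas `m t v` drifts arbitrarily far from `V`. This yields `n ≤ r` units with linearly
(hence multiplicatively) independent logarithmic embeddings of norm `≤ 2ρ + ε`. Since the
coordinates of `ℓ(u)` sum to zero, `h(u) = (1/2d) ∑ |ℓ_w(u)| ≤ (s/2d) ‖ℓ(u)‖_∞`, and the
product of `n` such heights bounds `μ_K(n)` by `((s/d)(ρ + ε/2))^n`.
-/

open Submodule in
theorem Submodule.le_span_norm_le_of_forall_exists_norm_sub_le
    {E : Type*} [NormedAddCommGroup E] [NormedSpace ℝ E] [FiniteDimensional ℝ E]
    (A : AddSubgroup E) (H : Submodule ℝ E) {R η : ℝ} (hη : 0 < η)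
    (hcov : ∀ v ∈ H, ∃ a ∈ A, ‖v - a‖ ≤ R) :
    H ≤ span ℝ {a | a ∈ A ∧ ‖a‖ ≤ 2 * R + η} := by
  set V := span ℝ {a | a ∈ A ∧ ‖a‖ ≤ 2 * R + η}
  have : IsClosed (V : Set E) := V.closed_of_finiteDimensional
  intro v hv
  by_contra hvV
  have hv0 : 0 < ‖v‖ := norm_pos_iff.mpr fun h => hvV (h ▸ V.zero_mem)
  set t := η / ‖v‖
  have ht : 0 < t := by positivity
  have htv : ‖t • v‖ = η := by
    rw [norm_smul, Real.norm_of_nonneg ht.le, div_mul_cancel₀ _ hv0.ne']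
  choose a haA hav using fun m : ℕ => hcov ((m * t) • v) (H.smul_mem _ hv)
  have hstep (m : ℕ) : a (m + 1) - a m ∈ V := by
    refine subset_span ⟨A.sub_mem (haA _) (haA _), ?_⟩
    have hnext : (((m + 1 : ℕ) : ℝ) * t) • v = ((m : ℝ) * t) • v + t • v := by
      rw [Nat.cast_succ, add_mul, one_mul, add_smul]
    calc ‖a (m + 1) - a m‖
        = ‖((m * t) • v - a m) + t • v - ((((m + 1 : ℕ) : ℝ) * t) • v - a (m + 1))‖ := by
          rw [hnext]; abel_nf
      _ ≤ ‖(m * t) • v - a m‖ + ‖t • v‖ + ‖(((m + 1 : ℕ) : ℝ) * t) • v - a (m + 1)‖ :=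
          norm_sub_le_of_le (norm_add_le _ _) le_rfl
      _ ≤ 2 * R + η := by linarith [hav m, hav (m + 1)]
  have hconst (m : ℕ) : V.mkQ (a m) = V.mkQ (a 0) := by
    induction m with
    | zero => rfl
    | succ m ih =>
      rw [← ih, ← sub_eq_zero, ← map_sub, mkQ_apply, Quotient.mk_eq_zero]
      exact hstep m
  have hpos : 0 < ‖V.mkQ v‖ := norm_pos_iff.mpr (by simpa using hvV)
  have hbound (m : ℕ) : m * t * ‖V.mkQ v‖ ≤ R + ‖V.mkQ (a 0)‖ :=
    calc m * t * ‖V.mkQ v‖ = ‖V.mkQ ((m * t) • v)‖ := by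
          rw [map_smul, norm_smul, Real.norm_of_nonneg (by positivity)]
      _ = ‖V.mkQ ((m * t) • v - a m) + V.mkQ (a 0)‖ := by rw [map_sub, hconst, sub_add_cancel]
      _ ≤ ‖(m * t) • v - a m‖ + ‖V.mkQ (a 0)‖ :=
          (norm_add_le _ _).trans (add_le_add_left (Submodule.Quotient.norm_mk_le _ _) _)
      _ ≤ R + ‖V.mkQ (a 0)‖ := by gcongr; exact hav m
  obtain ⟨m, hm⟩ := exists_nat_gt ((R + ‖V.mkQ (a 0)‖) / (t * ‖V.mkQ v‖))
  rw [div_lt_iff₀ (by positivity)] at hm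
  linarith [hbound m]

theorem exists_linearIndependent_fin_of_le_finrank_span
    {K V : Type*} [DivisionRing K] [AddCommGroup V] [Module K V] [FiniteDimensional K V]
    {S : Set V} {n : ℕ} (hn : n ≤ Module.finrank K (Submodule.span K S)) :
    ∃ f : Fin n → V, (∀ i, f i ∈ S) ∧ LinearIndependent K f := by
  obtain ⟨b, hbS, hspan, hli⟩ := exists_linearIndependent K S
  have : Finite b := hli.finite
  have := Fintype.ofFinite b
  rw [← hspan, finrank_span_set_eq_card hli, Set.toFinset_card] at hn
  obtain ⟨f⟩ : Nonempty (Fin n ↪ b) :=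
    Function.Embedding.nonempty_of_card_le (by rwa [Fintype.card_fin])
  exact ⟨fun i => ((f i : b) : V), fun i => hbS (f i).2, hli.comp f f.injective⟩

def zeroSumSubspace (ι : Type*) [Fintype ι] : Submodule ℝ (ι → ℝ) :=
  LinearMap.ker (∑ i, LinearMap.proj i)

theorem mem_zeroSumSubspace {ι : Type*} [Fintype ι] {v : ι → ℝ} :
    v ∈ zeroSumSubspace ι ↔ ∑ i, v i = 0 := by
  simp [zeroSumSubspace]

theorem finrank_zeroSumSubspace_add_one (ι : Type*) [Fintype ι] [Nonempty ι] :
    Module.finrank ℝ (zeroSumSubspace ι) + 1 = Fintype.card ι := by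
  rw [zeroSumSubspace, Module.Dual.finrank_ker_add_one_of_ne_zero,
    Module.finrank_fintype_fun_eq_card]
  intro h
  have := LinearMap.congr_fun h (fun _ => 1)
  simp at this

theorem norm_le_card_mul_of_sum_eq_zero {ι : Type*} [Fintype ι] [DecidableEq ι]
    {v : ι → ℝ} (hv : ∑ i, v i = 0) (i₀ : ι) {C : ℝ} (hC0 : 0 ≤ C) (hC : ∀ i, i ≠ i₀ → |v i| ≤ C) :
    ‖v‖ ≤ Fintype.card ι * C := by
  have hcard : (1 : ℝ) ≤ Fintype.card ι := by exact_mod_cast Fintype.card_pos_iff.mpr ⟨i₀⟩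
  refine (pi_norm_le_iff_of_nonneg (by positivity)).mpr fun i => ?_
  rw [Real.norm_eq_abs]
  by_cases hi : i = i₀
  · subst hi
    rw [Fintype.sum_eq_add_sum_subtype_ne _ i, add_eq_zero_iff_eq_neg] at hv
    calc |v i| = |∑ j : {j // j ≠ i}, v j| := by rw [hv, abs_neg]
      _ ≤ ∑ j : {j // j ≠ i}, |v j| := Finset.abs_sum_le_sum_abs _ _
      _ ≤ ∑ _j : {j // j ≠ i}, C := Finset.sum_le_sum fun j _ => hC j j.2
      _ ≤ Fintype.card ι * C := by
          rw [Finset.sum_const, nsmul_eq_mul, Finset.card_univ]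
          gcongr
          exact_mod_cast Fintype.card_subtype_le _
  · exact (hC i hi).trans (le_mul_of_one_le_left hC0 hcard)

theorem sum_max_zero_eq_half_sum_abs {ι : Type*} [Fintype ι] {v : ι → ℝ}
    (hv : ∑ i, v i = 0) :
    ∑ i, max 0 (v i) = (∑ i, |v i|) / 2 := by
  have h (x : ℝ) : 2 * max 0 x = |x| + x := by
    rcases le_total 0 x with hx | hx
    · rw [max_eq_right hx, abs_of_nonneg hx]; ring
    · rw [max_eq_left hx, abs_of_nonpos hx]; ring
  rw [eq_div_iff two_ne_zero, mul_comm, Finset.mul_sum]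
  simp_rw [h]
  rw [Finset.sum_add_distrib, hv, add_zero]

section NumberField

open NumberField.InfinitePlace NumberField.Units NumberField.Units.dirichletUnitTheorem

variable {K : Type} [Field K] [NumberField K]

theorem NumberField.InfinitePlace.sum_embeddings_eq_sum_mult_smul {M : Type*}
    [AddCommMonoid M] (f : InfinitePlace K → M) : ∑ φ : K →+* ℂ, f (mk φ) = ∑ w, mult w • f w := by
  classical
  rw [← Finset.sum_fiberwise Finset.univ mk]
  refine Finset.sum_congr rfl fun w _ => ?_
  rw [Finset.sum_congr rfl fun φ hφ => congrArg f (Finset.mem_filter.mp hφ).2, Finset.sum_const,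
    card_filter_mk_eq]

noncomputable def logEmbHom (K : Type) [Field K] [NumberField K] :
    Additive (𝓞 K)ˣ →+ (InfinitePlace K → ℝ) where
  toFun u := logEmb K u.toMul
  map_zero' := by ext; simp [logEmb]
  map_add' u v := by ext; simp [logEmb, Real.log_mul, mul_add]

theorem logEmbHom_ofMul (u : (𝓞 K)ˣ) : logEmbHom K (Additive.ofMul u) = logEmb K u := rfl

theorem logEmb_prod_zpow {n : ℕ} (u : Fin n → (𝓞 K)ˣ) (e : Fin n → ℤ) :
    logEmb K (∏ i, u i ^ e i) = ∑ i, (e i : ℝ) • logEmb K (u i) := by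
  simp_rw [← logEmbHom_ofMul, ofMul_prod, ofMul_zpow, map_sum, map_zsmul, Int.cast_smul_eq_zsmul]

theorem multIndep_of_linearIndependent {n : ℕ} {u : Fin n → (𝓞 K)ˣ}
    (h : LinearIndependent ℝ fun i => logEmb K (u i)) : MultIndep K u := by
  intro e he i
  have h0 : ∑ j, (e j : ℝ) • logEmb K (u j) = 0 := by
    rw [← logEmb_prod_zpow, he, ← logEmbHom_ofMul, ofMul_one, map_zero]
  exact_mod_cast Fintype.linearIndependent_iff.mp h _ h0 i

theorem weilHeight_nonneg (x : 𝓞 K) : 0 ≤ weilHeight K x :=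
  div_nonneg (Finset.sum_nonneg fun _ _ => le_max_left _ _) (Nat.cast_nonneg _)

theorem weilHeight_coe_unit (u : (𝓞 K)ˣ) :
    weilHeight K u = (∑ w, max 0 (logEmb K u w)) / Module.finrank ℚ K := by
  simp_rw [weilHeight, ← InfinitePlace.apply, sum_embeddings_eq_sum_mult_smul
    (fun w => max 0 (Real.log (w (u : K)))), nsmul_eq_mul,
    mul_max_of_nonneg _ _ (Nat.cast_nonneg _), mul_zero, logEmb]

theorem weilHeight_le_norm_logEmb (u : (𝓞 K)ˣ) :
    weilHeight K u ≤
      Fintype.card (InfinitePlace K) / (2 * Module.finrank ℚ K) * ‖logEmb K u‖ := by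
  rw [weilHeight_coe_unit, sum_max_zero_eq_half_sum_abs (sum_logEmb u), div_div,
    div_mul_eq_mul_div]
  gcongr
  calc ∑ w, |logEmb K u w| ≤ ∑ _w : InfinitePlace K, ‖logEmb K u‖ :=
        Finset.sum_le_sum fun w _ => norm_le_pi_norm (logEmb K u) w
    _ = _ := by rw [Finset.sum_const, nsmul_eq_mul, Finset.card_univ]

-- Needed because `rhoInf` is a `⨆` of reals, a junk `0` unless the distances are bounded.
theorem exists_norm_sub_logEmb_le :
    ∃ C, ∀ v ∈ zeroSumSubspace (InfinitePlace K), ∃ u : (𝓞 K)ˣ, ‖v - logEmb K u‖ ≤ C := by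
  classical
  let b := (basisUnitLattice K).ofZLatticeBasis ℝ (unitLattice K)
  refine ⟨Fintype.card (InfinitePlace K) * ∑ i, ‖b i‖, fun v hv => ?_⟩
  let x : logSpace K := fun w => v w
  obtain ⟨u, hu⟩ : ∃ u : (𝓞 K)ˣ, logEmbedding K (Additive.ofMul u) = ZSpan.floor b x := by
    have : (ZSpan.floor b x : logSpace K) ∈ unitLattice K := by
      rw [← (basisUnitLattice K).ofZLatticeBasis_span ℝ]
      exact (ZSpan.floor b x).2
    obtain ⟨u, -, hu⟩ := this
    exact ⟨u.toMul, hu⟩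
  refine ⟨u, norm_le_card_mul_of_sum_eq_zero ?_ w₀ (by positivity) fun w hw => ?_⟩
  · simp only [Pi.sub_apply, Finset.sum_sub_distrib, mem_zeroSumSubspace.mp hv, sum_logEmb,
      sub_zero]
  · calc |(v - logEmb K u) w| = ‖ZSpan.fract b x ⟨w, hw⟩‖ := by
          rw [ZSpan.fract_apply, ← hu]; rfl
      _ ≤ ‖ZSpan.fract b x‖ := norm_le_pi_norm _ _
      _ ≤ ∑ i, ‖b i‖ := ZSpan.norm_fract_le b x

theorem exists_norm_sub_logEmb_lt {v : InfinitePlace K → ℝ}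
    (hv : v ∈ zeroSumSubspace (InfinitePlace K)) {δ : ℝ} (hδ : 0 < δ) :
    ∃ u : (𝓞 K)ˣ, ‖v - logEmb K u‖ < rhoInf K + δ := by
  obtain ⟨C, hC⟩ := exists_norm_sub_logEmb_le (K := K)
  have hbdd : BddAbove (Set.range fun v : {v : InfinitePlace K → ℝ // ∑ w, v w = 0} =>
      ⨅ u : (𝓞 K)ˣ, ‖(v : InfinitePlace K → ℝ) - logEmb K u‖) := by
    refine ⟨C, ?_⟩
    rintro _ ⟨v, rfl⟩
    obtain ⟨u, hu⟩ := hC v (mem_zeroSumSubspace.mpr v.2)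
    exact ciInf_le_of_le ⟨0, by rintro _ ⟨u, rfl⟩; exact norm_nonneg _⟩ u hu
  have := le_ciSup hbdd ⟨v, mem_zeroSumSubspace.mp hv⟩
  exact exists_lt_of_ciInf_lt (this.trans_lt (lt_add_of_pos_right _ hδ))

theorem zeroSumSubspace_le_span_logEmb_norm_le {ε : ℝ} (hε : 0 < ε) :
    zeroSumSubspace (InfinitePlace K) ≤
      Submodule.span ℝ {a | a ∈ (logEmbHom K).range ∧ ‖a‖ ≤ 2 * (rhoInf K + ε)} := by
  have := Submodule.le_span_norm_le_of_forall_exists_norm_sub_le (logEmbHom K).range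
    (zeroSumSubspace (InfinitePlace K)) hε (R := rhoInf K + ε / 2) fun v hv => by
      obtain ⟨u, hu⟩ := exists_norm_sub_logEmb_lt hv (half_pos hε)
      exact ⟨logEmb K u, ⟨Additive.ofMul u, rfl⟩, hu.le⟩
  rwa [show 2 * (rhoInf K + ε / 2) + ε = 2 * (rhoInf K + ε) by ring] at this

theorem exists_multIndep_norm_logEmb_le {ε : ℝ} (hε : 0 < ε) {n : ℕ}
    (hn : n ≤ Units.rank K) :
    ∃ u : Fin n → (𝓞 K)ˣ, MultIndep K u ∧ ∀ i, ‖logEmb K (u i)‖ ≤ 2 * (rhoInf K + ε) := by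
  have hfin : n ≤ Module.finrank ℝ (Submodule.span ℝ
      {a | a ∈ (logEmbHom K).range ∧ ‖a‖ ≤ 2 * (rhoInf K + ε)}) := by
    have := Submodule.finrank_mono (zeroSumSubspace_le_span_logEmb_norm_le (K := K) hε)
    have := finrank_zeroSumSubspace_add_one (InfinitePlace K)
    rw [Units.rank] at hn
    omega
  obtain ⟨f, hfS, hli⟩ := exists_linearIndependent_fin_of_le_finrank_span hfin
  choose u hu using fun i => (hfS i).1
  have hf : (fun i => logEmb K (u i).toMul) = f := funext hu
  exact ⟨fun i => (u i).toMul, multIndep_of_linearIndependent (hf ▸ hli),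
    fun i => (congrFun hf i).symm ▸ (hfS i).2⟩

theorem muK_nonneg (n : ℕ) : 0 ≤ muK K n :=
  Real.sInf_nonneg <| by
    rintro _ ⟨u, -, rfl⟩
    exact Finset.prod_nonneg fun _ _ => weilHeight_nonneg _

theorem muK_le_prod_weilHeight {n : ℕ} {u : Fin n → (𝓞 K)ˣ} (hu : MultIndep K u) :
    muK K n ≤ ∏ i, weilHeight K (u i) :=
  csInf_le ⟨0, fun _ ⟨_, _, ht⟩ => ht ▸ Finset.prod_nonneg fun _ _ => weilHeight_nonneg _⟩
    ⟨u, hu, rfl⟩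

theorem muK_rpow_le {n : ℕ} (hn : n ≠ 0) {u : Fin n → (𝓞 K)ˣ} (hu : MultIndep K u) {X : ℝ}
    (hX : ∀ i, weilHeight K (u i) ≤ X) : muK K n ^ ((1 : ℝ) / n) ≤ X := by
  have hX0 : 0 ≤ X := (weilHeight_nonneg _).trans (hX ⟨0, Nat.pos_of_ne_zero hn⟩)
  have hμ : muK K n ≤ X ^ n := (muK_le_prod_weilHeight hu).trans <| by
    simpa using Finset.prod_le_prod (s := Finset.univ) (fun i _ => weilHeight_nonneg _)
      fun i _ => hX i
  calc muK K n ^ ((1 : ℝ) / n) ≤ (X ^ n) ^ ((1 : ℝ) / n) :=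
        Real.rpow_le_rpow (muK_nonneg n) hμ (by positivity)
    _ = X := by rw [one_div, Real.pow_rpow_inv_natCast hX0 hn]

end NumberField

/-- For `1 ≤ n ≤ r` (the unit rank), `ρ_∞(K) ≥ (d/s)·μ_K(n)^{1/n}` where `d = [K:ℚ]` and
`s` is the number of infinite places of `K`. -/
theorem rhoInf_ge_muK (K : Type) [Field K] [NumberField K]
    (n : ℕ) (hn1 : 1 ≤ n) (hnr : n ≤ NumberField.Units.rank K) :
    (Module.finrank ℚ K : ℝ) / (Fintype.card (NumberField.InfinitePlace K) : ℝ) *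
      (muK K n) ^ ((1 : ℝ) / (n : ℝ)) ≤ rhoInf K := by
  have hd : (0 : ℝ) < Module.finrank ℚ K := by exact_mod_cast Module.finrank_pos
  have hs : (0 : ℝ) < Fintype.card (InfinitePlace K) := by exact_mod_cast Fintype.card_pos
  refine le_of_forall_pos_le_add fun ε hε => ?_
  obtain ⟨u, hu, hshort⟩ := exists_multIndep_norm_logEmb_le hε hnr
  have hX (i : Fin n) : weilHeight K (u i) ≤
      Fintype.card (InfinitePlace K) / Module.finrank ℚ K * (rhoInf K + ε) :=
    calc weilHeight K (u i)
        ≤ Fintype.card (InfinitePlace K) / (2 * Module.finrank ℚ K) * (2 * (rhoInf K + ε)) := by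
          refine (weilHeight_le_norm_logEmb (u i)).trans ?_
          gcongr
          exact hshort i
      _ = _ := by field_simp
  calc (Module.finrank ℚ K : ℝ) / Fintype.card (InfinitePlace K) * muK K n ^ ((1 : ℝ) / n)
      ≤ Module.finrank ℚ K / Fintype.card (InfinitePlace K) *
          (Fintype.card (InfinitePlace K) / Module.finrank ℚ K * (rhoInf K + ε)) := by
        gcongr
        exact muK_rpow_le (by omega) hu hX
    _ = rhoInf K + ε := by field_simp
end

section
/- Let K be a number field, x ∈ K, and B > 0. Then the set of units u ∈ O_K^× such that |σ(xu)| ≥ B for all embeddings σ : K → ℂ is finite. -/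
/-!
Since `|σ(xu)| ≤ M |σ(u)|` with `M` bounding all `|σ(x)|`, every such unit satisfies
`|σ(u)| ≥ B / M` at every embedding. The product of the `|σ(u)|` is `|N(u)| = 1`, so these lower
bounds turn into a uniform upper bound `(B / M)^{-(n-1)}` on every `|σ(u)|`, and there are only
finitely many algebraic integers with all conjugates bounded.
-/

open NumberField

theorem le_inv_pow_of_prod_eq_one {α ι : Type*} [Field α] [LinearOrder α] [IsStrictOrderedRing α]
    [Fintype ι] {f : ι → α} {c : α} (hc : 0 < c) (hf : ∀ i, c ≤ f i) (hprod : ∏ i, f i = 1)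
    (i : ι) : f i ≤ (c ^ (Fintype.card ι - 1))⁻¹ := by
  classical
  have hrest : c ^ (Fintype.card ι - 1) ≤ ∏ j ∈ Finset.univ.erase i, f j :=
    calc c ^ (Fintype.card ι - 1) = ∏ _j ∈ Finset.univ.erase i, c := by
          rw [Finset.prod_const, Finset.card_erase_of_mem (Finset.mem_univ i), Finset.card_univ]
      _ ≤ _ := Finset.prod_le_prod (fun _ _ => hc.le) fun j _ => hf j
  rw [← one_div, le_div_iff₀ (pow_pos hc _)]
  calc f i * c ^ (Fintype.card ι - 1) ≤ f i * ∏ j ∈ Finset.univ.erase i, f j :=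
        mul_le_mul_of_nonneg_left hrest (hc.le.trans (hf i))
    _ = 1 := by rw [Finset.mul_prod_erase _ _ (Finset.mem_univ i), hprod]

namespace NumberField

variable {K : Type*} [Field K] [NumberField K]

theorem prod_norm_embeddings_eq_abs_norm (y : K) :
    ∏ φ : K →+* ℂ, ‖φ y‖ = |(Algebra.norm ℚ y : ℝ)| := by
  rw [Fintype.prod_equiv (RingHom.equivRatAlgHom K ℂ) _ (fun f => ‖f y‖)
      fun _ => by simp [RingHom.equivRatAlgHom_apply], ← norm_prod,
    ← Algebra.norm_eq_prod_embeddings, eq_ratCast, Complex.norm_ratCast]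

theorem Units.prod_norm_embeddings_eq_one (u : (𝓞 K)ˣ) :
    ∏ φ : K →+* ℂ, ‖φ ((u : 𝓞 K) : K)‖ = 1 := by
  rw [prod_norm_embeddings_eq_abs_norm]
  exact_mod_cast Units.norm K u

theorem Units.finite_setOf_forall_le_norm_embeddings {c : ℝ} (hc : 0 < c) :
    {u : (𝓞 K)ˣ | ∀ φ : K →+* ℂ, c ≤ ‖φ ((u : 𝓞 K) : K)‖}.Finite := by
  refine Set.Finite.of_finite_image ?_ (Units.coe_injective K).injOn
  refine (Embeddings.finite_of_norm_le K ℂ (c ^ (Fintype.card (K →+* ℂ) - 1))⁻¹).subset ?_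
  rintro _ ⟨u, hu, rfl⟩
  exact ⟨(u : 𝓞 K).isIntegral_coe,
    le_inv_pow_of_prod_eq_one hc hu (Units.prod_norm_embeddings_eq_one u)⟩

end NumberField

/-- For `x ∈ K` and `B > 0`, there are only finitely many units `u ∈ 𝓞_K^×` such that
`|σ(xu)| ≥ B` for every embedding `σ : K → ℂ`. -/
theorem finitely_many_solutions (K : Type) [Field K] [NumberField K]
    (x : K) (B : ℝ) (hB : 0 < B) :
    {u : (𝓞 K)ˣ | ∀ σ : K →+* ℂ,
      B ≤ ‖σ (x * ((u : 𝓞 K) : K))‖}.Finite := by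
  set M := ∑ σ : K →+* ℂ, ‖σ x‖ + 1
  have hM : 0 < M := by positivity
  have hxM (σ : K →+* ℂ) : ‖σ x‖ ≤ M :=
    (Finset.single_le_sum (fun τ _ => norm_nonneg (τ x)) (Finset.mem_univ σ)).trans
      (le_add_of_nonneg_right zero_le_one)
  refine (Units.finite_setOf_forall_le_norm_embeddings (div_pos hB hM)).subset fun u hu σ => ?_
  rw [div_le_iff₀' hM]
  calc B ≤ ‖σ x‖ * ‖σ ((u : 𝓞 K) : K)‖ := by simpa only [map_mul, norm_mul] using hu σ
    _ ≤ M * ‖σ ((u : 𝓞 K) : K)‖ := mul_le_mul_of_nonneg_right (hxM σ) (norm_nonneg _)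
end
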